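/- arXiv:2404.13737 — 6 statements merged into one kernel-verified Lean document; each statement's English description precedes it below -/
import Mathlib

section
/- For every vector (d_1,...,d_T) of nonnegative real numbers with sum equal to B, there exists a vector (b_1,...,b_T) of nonnegative integers with sum equal to B such that the sum over t of G_t(d_t) is at most the sum over t of g_t(b_t). -/
/-!
On the cell where every `d t` keeps its floor `f t`, the objective is affine:
`∑ t, G_t (d t) = ∑ t, g_t (f t) + ∑ t, r t * Δ t` with fractional parts `r t ∈ [0, 1)` and
increments `Δ t = g_t (f t + 1) - g_t (f t)`. The fractional parts sum to the integer
`k = B - ∑ t, f t`, so `r` lies in the hypersimplex `{0 ≤ r ≤ 1, ∑ r = k}`, and a linear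
function on it is maximised at a vertex, the indicator of a `k`-element set `S`. Rounding up
exactly on `S` gives the integer allocation.
-/

open Finset

/-- The interpolation `G_t` of the paper, for `h = g_t`. -/
noncomputable def natInterp (h : ℕ → ℝ) (x : ℝ) : ℝ :=
  (x - ⌊x⌋₊) * h ⌈x⌉₊ + (1 - (x - ⌊x⌋₊)) * h ⌊x⌋₊

lemma natInterp_eq_add_mul (h : ℕ → ℝ) {x : ℝ} (hx : 0 ≤ x) :
    natInterp h x = h ⌊x⌋₊ + (x - ⌊x⌋₊) * (h (⌊x⌋₊ + 1) - h ⌊x⌋₊) := by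
  rcases (Nat.floor_le hx).eq_or_lt with hint | hfrac
  · obtain ⟨n, rfl⟩ : ∃ n : ℕ, x = n := ⟨_, hint.symm⟩
    simp [natInterp]
  · have hceil : ⌈x⌉₊ = ⌊x⌋₊ + 1 :=
      le_antisymm (Nat.ceil_le_floor_add_one x) (Nat.lt_ceil.mpr hfrac)
    rw [natInterp, hceil]
    ring

section Hypersimplex

variable {ι : Type*} [Fintype ι]

lemma exists_threshold_of_forall_le (Δ : ι → ℝ) (S : Finset ι) (hS : ∀ s ∈ S, ∀ u ∉ S, Δ u ≤ Δ s) :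
    ∃ c : ℝ, (∀ s ∈ S, c ≤ Δ s) ∧ ∀ u ∉ S, Δ u ≤ c := by
  rcases S.eq_empty_or_nonempty with rfl | hne
  · exact ⟨∑ i, |Δ i|, by simp, fun u _ =>
      (le_abs_self _).trans (single_le_sum (fun i _ => abs_nonneg (Δ i)) (mem_univ u))⟩
  · exact ⟨S.inf' hne Δ, fun s hs => inf'_le _ hs, fun u hu => (le_inf'_iff _ _).mpr
      fun s hs => hS s hs u hu⟩

variable [DecidableEq ι]

/-- Take `S` maximising `∑ i ∈ S, Δ i` among `k`-element sets: swapping `s ∈ S` for `u ∉ S`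
with `Δ s < Δ u` would increase the sum. -/
lemma exists_card_eq_forall_le_of_notMem (Δ : ι → ℝ) {k : ℕ} (hk : k ≤ Fintype.card ι) :
    ∃ S : Finset ι, #S = k ∧ ∀ s ∈ S, ∀ u ∉ S, Δ u ≤ Δ s := by
  obtain ⟨S, hS, hmax⟩ := (powersetCard k (univ : Finset ι)).exists_max_image (∑ i ∈ ·, Δ i)
    (powersetCard_nonempty.mpr hk)
  rw [mem_powersetCard_univ] at hS
  refine ⟨S, hS, fun s hs u hu => ?_⟩
  have hu' : u ∉ S.erase s := fun h => hu (mem_of_mem_erase h)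
  have hswap := hmax (insert u (S.erase s)) <| by
    rw [mem_powersetCard_univ, card_insert_of_notMem hu', card_erase_of_mem hs, hS]
    have : 0 < k := hS ▸ card_pos.mpr ⟨s, hs⟩
    omega
  rw [sum_insert hu', ← sum_erase_add _ _ hs] at hswap
  linarith

theorem exists_card_eq_sum_mul_le_sum (Δ r : ι → ℝ) (hr0 : ∀ i, 0 ≤ r i) (hr1 : ∀ i, r i ≤ 1)
    {k : ℕ} (hrk : ∑ i, r i = k) :
    ∃ S : Finset ι, #S = k ∧ ∑ i, r i * Δ i ≤ ∑ i ∈ S, Δ i := by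
  have hk : k ≤ Fintype.card ι := by
    have : (k : ℝ) ≤ Fintype.card ι := by
      simpa [hrk] using sum_le_sum fun i (_ : i ∈ univ) => hr1 i
    exact_mod_cast this
  obtain ⟨S, hcard, hS⟩ := exists_card_eq_forall_le_of_notMem Δ hk
  obtain ⟨c, hcS, hcSc⟩ := exists_threshold_of_forall_le Δ S hS
  refine ⟨S, hcard, ?_⟩
  -- Termwise `r i * Δ i + c * (1_S i - r i) ≤ 1_S i * Δ i`, and the `c`-terms sum to `c * (k - k)`.
  have hterm : ∀ i, r i * Δ i + c * ((if i ∈ S then 1 else 0) - r i)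
      ≤ (if i ∈ S then 1 else 0) * Δ i := by
    intro i
    split_ifs with hi
    · nlinarith [hcS i hi, hr1 i]
    · nlinarith [hcSc i hi, hr0 i]
  have hsum := sum_le_sum fun i (_ : i ∈ univ) => hterm i
  simp only [sum_add_distrib, ← mul_sum, sum_sub_distrib, sum_boole, ite_mul, one_mul,
    zero_mul, sum_ite_mem, univ_inter, filter_mem_eq_inter, hrk, hcard] at hsum
  simpa using hsum

end Hypersimplex

theorem stmt0_general (T B : ℕ) (g : Fin T → ℕ → ℝ)
    (d : Fin T → ℝ) (hd : ∀ t, 0 ≤ d t) (hdsum : ∑ t, d t = (B : ℝ)) :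
    ∃ b : Fin T → ℕ, (∑ t, b t = B) ∧
      ∑ t, ((d t - (⌊d t⌋₊ : ℝ)) * g t ⌈d t⌉₊
            + (1 - (d t - (⌊d t⌋₊ : ℝ))) * g t ⌊d t⌋₊)
        ≤ ∑ t, g t (b t) := by
  set f : Fin T → ℕ := fun t => ⌊d t⌋₊
  have hfB : ∑ t, f t ≤ B := by
    have : ((∑ t, f t : ℕ) : ℝ) ≤ B := by
      push_cast
      exact hdsum ▸ sum_le_sum fun t _ => Nat.floor_le (hd t)
    exact_mod_cast this
  have hfrac : ∑ t, (d t - f t) = ((B - ∑ t, f t : ℕ) : ℝ) := by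
    rw [sum_sub_distrib, hdsum, Nat.cast_sub hfB, Nat.cast_sum]
  obtain ⟨S, hcard, hS⟩ := exists_card_eq_sum_mul_le_sum (fun t => g t (f t + 1) - g t (f t))
    (fun t => d t - f t) (fun t => sub_nonneg.mpr (Nat.floor_le (hd t)))
    (fun t => (sub_le_iff_le_add'.mpr (Nat.lt_floor_add_one (d t)).le)) hfrac
  refine ⟨fun t => f t + if t ∈ S then 1 else 0, ?_, ?_⟩
  · simp only [sum_add_distrib, sum_boole, filter_univ_mem, Nat.cast_id, hcard]
    omega
  · change ∑ t, natInterp (g t) (d t) ≤ _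
    have hround : ∀ t, g t (f t + if t ∈ S then 1 else 0)
        = g t (f t) + if t ∈ S then g t (f t + 1) - g t (f t) else 0 := by
      intro t
      split_ifs <;> simp
    simp only [natInterp_eq_add_mul _ (hd _), hround, sum_add_distrib, sum_ite_mem, univ_inter]
    exact add_le_add le_rfl hS

/-- Lemma 2 of the paper: for every vector `d` of nonnegative reals summing to the
budget `B`, there is a vector `b` of nonnegative integers summing to `B` such that
the total piecewise-linear interpolated value `∑ t, G_t (d t)` is at most
`∑ t, g_t (b t)`, where
`G_t d = (d − ⌊d⌋) * g_t ⌈d⌉ + (1 − (d − ⌊d⌋)) * g_t ⌊d⌋`. -/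
theorem stmt0 (T B : ℕ) (hT : 1 ≤ T) (g : Fin T → ℕ → ℝ)
    (hg : ∀ t b, 0 ≤ g t b)
    (d : Fin T → ℝ) (hd : ∀ t, 0 ≤ d t) (hdsum : ∑ t, d t = (B : ℝ)) :
    ∃ b : Fin T → ℕ, (∑ t, b t = B) ∧
      ∑ t, ((d t - (⌊d t⌋₊ : ℝ)) * g t ⌈d t⌉₊
            + (1 - (d t - (⌊d t⌋₊ : ℝ))) * g t ⌊d t⌋₊)
        ≤ ∑ t, g t (b t) :=
  stmt0_general T B g d hd hdsum
end

section
/- Suppose (d_1,...,d_T) is a vector of nonnegative real numbers with sum equal to the natural number B such that at least one coordinate d_t is not an integer. Then there exists a vector (d'_1,...,d'_T) of nonnegative real numbers with sum equal to B such that: (i) the number of integer coordinates of d' is strictly larger than that of d, and (ii) the sum over t of G_t(d'_t) is at least the sum over t of G_t(d_t). (Moreover d' can be chosen to differ from d in exactly two coordinates.) -/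
/-!
Pick a fractional coordinate `i`. Since the coordinates sum to an integer, some other
coordinate `j` is fractional too. Order the two so that the slope of `g i` on
`[⌊d i⌋, ⌊d i⌋ + 1]` is at least that of `g j` on `[⌊d j⌋, ⌊d j⌋ + 1]`, and move mass
`ε` from `j` to `i`, with `ε` as large as possible without leaving either unit interval.
The interpolations are affine there, so the total value changes by `ε` times the
difference of the slopes, which is nonnegative, and one of the two coordinates lands
on an integer.
-/

open Finset

noncomputable def linInterp (g : ℕ → ℝ) (x : ℝ) : ℝ :=
  (x - ⌊x⌋₊) * g ⌈x⌉₊ + (1 - (x - ⌊x⌋₊)) * g ⌊x⌋₊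

lemma linInterp_eq_of_mem_Icc (g : ℕ → ℝ) {n : ℕ} {x : ℝ} (h₁ : (n : ℝ) ≤ x)
    (h₂ : x ≤ n + 1) : linInterp g x = g n + (x - n) * (g (n + 1) - g n) := by
  unfold linInterp
  rcases h₁.eq_or_lt with rfl | h₁
  · simp
  rcases h₂.eq_or_lt with rfl | h₂
  · rw [show (n : ℝ) + 1 = (n + 1 : ℕ) by push_cast; rfl, Nat.floor_natCast, Nat.ceil_natCast]
    push_cast
    ring
  have hfloor : ⌊x⌋₊ = n := (Nat.floor_eq_iff ((Nat.cast_nonneg n).trans h₁.le)).2 ⟨h₁.le, h₂⟩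
  have hceil : ⌈x⌉₊ = n + 1 := (Nat.ceil_eq_iff n.succ_ne_zero).2 ⟨by push_cast; simpa, by
    push_cast; exact h₂.le⟩
  rw [hfloor, hceil]
  ring

lemma linInterp_eq_add_slope_mul (g : ℕ → ℝ) {x y : ℝ} (hx : 0 ≤ x) (hy₁ : (⌊x⌋₊ : ℝ) ≤ y)
    (hy₂ : y ≤ ⌊x⌋₊ + 1) :
    linInterp g y = linInterp g x + (y - x) * (g (⌊x⌋₊ + 1) - g ⌊x⌋₊) := by
  rw [linInterp_eq_of_mem_Icc g hy₁ hy₂,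
    linInterp_eq_of_mem_Icc g (Nat.floor_le hx) (Nat.lt_floor_add_one x).le]
  ring

lemma natCast_floor_lt_of_not_natCast {x : ℝ} (hx : 0 ≤ x) (h : ¬∃ m : ℕ, x = m) :
    (⌊x⌋₊ : ℝ) < x :=
  (Nat.floor_le hx).lt_of_ne fun e => h ⟨_, e.symm⟩

lemma exists_ne_not_natCast_of_sum_eq_natCast {ι : Type*} [Fintype ι] [DecidableEq ι]
    {d : ι → ℝ} {B : ℕ} {i : ι} (hdi : 0 ≤ d i) (hsum : ∑ t, d t = B)
    (hi : ¬∃ m : ℕ, d i = m) : ∃ j, j ≠ i ∧ ¬∃ m : ℕ, d j = m := by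
  by_contra! hnat
  obtain ⟨N, hN⟩ : ∃ N : ℕ, ∑ t ∈ univ.erase i, d t = N :=
    sum_induction _ (fun x : ℝ => ∃ m : ℕ, x = m)
      (fun _ _ ⟨a, ha⟩ ⟨b, hb⟩ => ⟨a + b, by rw [ha, hb, Nat.cast_add]⟩) ⟨0, Nat.cast_zero.symm⟩
      fun j hj => hnat j (ne_of_mem_erase hj)
  have hdi_eq : d i = B - N := by
    rw [← hsum, ← add_sum_erase _ _ (mem_univ i), hN]
    ring
  have hNB : N ≤ B := by exact_mod_cast (show (N : ℝ) ≤ B by linarith)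
  exact hi ⟨B - N, by rw [hdi_eq, Nat.cast_sub hNB]⟩

lemma sum_eq_sum_add_of_eq_of_ne_of_ne {ι α M : Type*} [Fintype ι] [DecidableEq ι]
    [AddCommGroup M] (φ : ι → α → M) {d d' : ι → α} {i j : ι} (hij : i ≠ j)
    (hd' : ∀ t, t ≠ i → t ≠ j → d' t = d t) :
    ∑ t, φ t (d' t) = ∑ t, φ t (d t) + (φ i (d' i) - φ i (d i)) + (φ j (d' j) - φ j (d j)) := by
  have hdiff : ∑ t, (φ t (d' t) - φ t (d t)) = ∑ t ∈ {i, j}, (φ t (d' t) - φ t (d t)) := by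
    refine (sum_subset (subset_univ _) fun t _ ht => ?_).symm
    simp only [mem_insert, mem_singleton, not_or] at ht
    rw [hd' t ht.1 ht.2, sub_self]
  rw [sum_sub_distrib, sum_pair hij, sub_eq_iff_eq_add'] at hdiff
  rw [hdiff, add_assoc]

lemma ncard_setOf_natCast_lt {ι : Type*} [Finite ι] {d d' : ι → ℝ} {i j : ι}
    (hi : ¬∃ m : ℕ, d i = m) (hj : ¬∃ m : ℕ, d j = m) (hd' : ∀ t, t ≠ i → t ≠ j → d' t = d t)
    (hnew : (∃ m : ℕ, d' i = m) ∨ ∃ m : ℕ, d' j = m) :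
    {t | ∃ m : ℕ, d t = m}.ncard < {t | ∃ m : ℕ, d' t = m}.ncard := by
  have hsub : {t | ∃ m : ℕ, d t = m} ⊆ {t | ∃ m : ℕ, d' t = m} := by
    rintro t ⟨m, hm⟩
    refine ⟨m, ?_⟩
    rw [hd' t (by rintro rfl; exact hi ⟨m, hm⟩) (by rintro rfl; exact hj ⟨m, hm⟩), hm]
  refine Set.ncard_lt_ncard ((Set.ssubset_iff_of_subset hsub).2 ?_) (Set.toFinite _)
  rcases hnew with h | h
  exacts [⟨i, h, hi⟩, ⟨j, h, hj⟩]

lemma exists_exchange {ι : Type*} [Fintype ι] [DecidableEq ι] (g : ι → ℕ → ℝ) {d : ι → ℝ}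
    (hd : ∀ t, 0 ≤ d t) {i j : ι} (hij : i ≠ j) (hi : ¬∃ m : ℕ, d i = m)
    (hj : ¬∃ m : ℕ, d j = m)
    (hslope : g j (⌊d j⌋₊ + 1) - g j ⌊d j⌋₊ ≤ g i (⌊d i⌋₊ + 1) - g i ⌊d i⌋₊) :
    ∃ d' : ι → ℝ, (∀ t, 0 ≤ d' t) ∧ ∑ t, d' t = ∑ t, d t ∧
      {t | ∃ m : ℕ, d t = m}.ncard < {t | ∃ m : ℕ, d' t = m}.ncard ∧
      ∑ t, linInterp (g t) (d t) ≤ ∑ t, linInterp (g t) (d' t) ∧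
      ∃ t₁ t₂ : ι, t₁ ≠ t₂ ∧ d' t₁ ≠ d t₁ ∧ d' t₂ ≠ d t₂ ∧
        ∀ t, t ≠ t₁ → t ≠ t₂ → d' t = d t := by
  have hi_lo := natCast_floor_lt_of_not_natCast (hd i) hi
  have hi_hi := Nat.lt_floor_add_one (d i)
  have hj_lo := natCast_floor_lt_of_not_natCast (hd j) hj
  have hj_hi := Nat.lt_floor_add_one (d j)
  set ε := min ((⌊d i⌋₊ : ℝ) + 1 - d i) (d j - ⌊d j⌋₊) with hε_def
  have hε : 0 < ε := lt_min (by linarith) (by linarith)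
  have hε_i : ε ≤ ⌊d i⌋₊ + 1 - d i := min_le_left _ _
  have hε_j : ε ≤ d j - ⌊d j⌋₊ := min_le_right _ _
  set d' := Function.update (Function.update d i (d i + ε)) j (d j - ε)
  have hd'i : d' i = d i + ε := by simp [d', hij]
  have hd'j : d' j = d j - ε := by simp [d']
  have hd'o : ∀ t, t ≠ i → t ≠ j → d' t = d t := by
    intro t hti htj
    simp [d', hti, htj]
  have hvi : linInterp (g i) (d' i)
      = linInterp (g i) (d i) + ε * (g i (⌊d i⌋₊ + 1) - g i ⌊d i⌋₊) := by
    rw [linInterp_eq_add_slope_mul _ (hd i) (by linarith) (by linarith), hd'i, add_sub_cancel_left]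
  have hvj : linInterp (g j) (d' j)
      = linInterp (g j) (d j) - ε * (g j (⌊d j⌋₊ + 1) - g j ⌊d j⌋₊) := by
    rw [linInterp_eq_add_slope_mul _ (hd j) (by linarith) (by linarith), hd'j]
    ring
  refine ⟨d', fun t => ?_, ?_, ncard_setOf_natCast_lt hi hj hd'o ?_, ?_,
    i, j, hij, by rw [hd'i]; linarith, by rw [hd'j]; linarith, hd'o⟩
  · rcases eq_or_ne t i with rfl | hti
    · rw [hd'i]; linarith [hd t]
    rcases eq_or_ne t j with rfl | htj
    · rw [hd'j]; linarith [Nat.cast_nonneg (α := ℝ) ⌊d t⌋₊]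
    · rw [hd'o t hti htj]; exact hd t
  · rw [sum_eq_sum_add_of_eq_of_ne_of_ne (fun _ x => x) hij hd'o, hd'i, hd'j]
    ring
  · rcases min_cases ((⌊d i⌋₊ : ℝ) + 1 - d i) (d j - ⌊d j⌋₊) with ⟨he, _⟩ | ⟨he, _⟩
    · exact .inl ⟨⌊d i⌋₊ + 1, by rw [hd'i, hε_def, he]; push_cast; ring⟩
    · exact .inr ⟨⌊d j⌋₊, by rw [hd'j, hε_def, he]; ring⟩
  · rw [sum_eq_sum_add_of_eq_of_ne_of_ne (fun t => linInterp (g t)) hij hd'o, hvi, hvj]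
    nlinarith

theorem stmt1_general (T B : ℕ) (g : Fin T → ℕ → ℝ)
    (d : Fin T → ℝ) (hd : ∀ t, 0 ≤ d t) (hdsum : ∑ t, d t = (B : ℝ))
    (hfrac : ∃ t, ¬ ∃ m : ℕ, d t = (m : ℝ)) :
    ∃ d' : Fin T → ℝ,
      (∀ t, 0 ≤ d' t) ∧ (∑ t, d' t = (B : ℝ)) ∧
      ({t | ∃ m : ℕ, d t = (m : ℝ)}.ncard < {t | ∃ m : ℕ, d' t = (m : ℝ)}.ncard) ∧
      (∑ t, ((d t - (⌊d t⌋₊ : ℝ)) * g t ⌈d t⌉₊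
              + (1 - (d t - (⌊d t⌋₊ : ℝ))) * g t ⌊d t⌋₊)
        ≤ ∑ t, ((d' t - (⌊d' t⌋₊ : ℝ)) * g t ⌈d' t⌉₊
              + (1 - (d' t - (⌊d' t⌋₊ : ℝ))) * g t ⌊d' t⌋₊)) ∧
      (∃ t₁ t₂ : Fin T, t₁ ≠ t₂ ∧ d' t₁ ≠ d t₁ ∧ d' t₂ ≠ d t₂ ∧
        ∀ t, t ≠ t₁ → t ≠ t₂ → d' t = d t) := by
  obtain ⟨i, hi⟩ := hfrac
  obtain ⟨j, hji, hj⟩ := exists_ne_not_natCast_of_sum_eq_natCast (hd i) hdsum hi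
  obtain ⟨d', hd'0, hd'sum, hcard, hval, hpair⟩ :=
    (le_total (g j (⌊d j⌋₊ + 1) - g j ⌊d j⌋₊) (g i (⌊d i⌋₊ + 1) - g i ⌊d i⌋₊)).elim
      (exists_exchange g hd hji.symm hi hj) (exists_exchange g hd hji hj hi)
  exact ⟨d', hd'0, hd'sum.trans hdsum, hcard, hval, hpair⟩

/-- The exchange step in the proof of Lemma 2 of the paper: if `d` is a vector of
nonnegative reals summing to the natural number `B` with at least one non-integer
coordinate, then there is a vector `d'` of nonnegative reals summing to `B`,
differing from `d` in exactly two coordinates, with strictly more integer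
coordinates, and with total interpolated value
`∑ t, G_t (d' t) ≥ ∑ t, G_t (d t)`, where
`G_t d = (d − ⌊d⌋) * g_t ⌈d⌉ + (1 − (d − ⌊d⌋)) * g_t ⌊d⌋`. -/
theorem stmt1 (T B : ℕ) (hT : 1 ≤ T) (g : Fin T → ℕ → ℝ)
    (hg : ∀ t b, 0 ≤ g t b)
    (d : Fin T → ℝ) (hd : ∀ t, 0 ≤ d t) (hdsum : ∑ t, d t = (B : ℝ))
    (hfrac : ∃ t, ¬ ∃ m : ℕ, d t = (m : ℝ)) :
    ∃ d' : Fin T → ℝ,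
      (∀ t, 0 ≤ d' t) ∧ (∑ t, d' t = (B : ℝ)) ∧
      ({t | ∃ m : ℕ, d t = (m : ℝ)}.ncard < {t | ∃ m : ℕ, d' t = (m : ℝ)}.ncard) ∧
      (∑ t, ((d t - (⌊d t⌋₊ : ℝ)) * g t ⌈d t⌉₊
              + (1 - (d t - (⌊d t⌋₊ : ℝ))) * g t ⌊d t⌋₊)
        ≤ ∑ t, ((d' t - (⌊d' t⌋₊ : ℝ)) * g t ⌈d' t⌉₊
              + (1 - (d' t - (⌊d' t⌋₊ : ℝ))) * g t ⌊d' t⌋₊)) ∧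
      (∃ t₁ t₂ : Fin T, t₁ ≠ t₂ ∧ d' t₁ ≠ d t₁ ∧ d' t₂ ≠ d t₂ ∧
        ∀ t, t ≠ t₁ → t ≠ t₂ → d' t = d t) :=
  stmt1_general T B g d hd hdsum hfrac
end

section
/- Let Δ : {1,...,T} × {0,...,n−1} → ℝ be such that each row is nonincreasing, i.e., Δ(t,j) ≤ Δ(t,i) whenever i ≤ j ≤ n−1. Let b be an allocation satisfying the local greedy-optimality condition: for all rounds t₁, t₂, if b_{t₁} ≥ 1 and b_{t₂} < n then Δ(t₁, b_{t₁} − 1) ≥ Δ(t₂, b_{t₂}). Then for every allocation b' (with the same total budget B), ∑_{t=1}^{T} ∑_{i=0}^{b'_t − 1} Δ(t,i) ≤ ∑_{t=1}^{T} ∑_{i=0}^{b_t − 1} Δ(t,i). -/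
/-!
Choose a threshold `c` lying between the last marginal gain spent by the greedy allocation and
the first one it leaves unspent in every round; the greedy condition is exactly what makes such a
`c` exist. Subtracting `c` from every marginal gain shifts the value of each allocation of budget
`B` by the same amount `B c`. After the shift, the gains of round `t` are nonnegative below `b t`
and nonpositive from `b t` on, so `b t` maximizes that round's partial sums.
-/

open Finset

lemma Set.Finite.exists_between_of_forall_le {α : Type*} [ConditionallyCompleteLinearOrder α]
    [Nonempty α] {s t : Set α} (hs : s.Finite) (ht : t.Finite) (hst : ∀ x ∈ s, ∀ y ∈ t, x ≤ y) :
    (upperBounds s ∩ lowerBounds t).Nonempty := by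
  rcases s.eq_empty_or_nonempty with rfl | hsne
  · rw [upperBounds_empty, Set.univ_inter]
    exact ht.bddBelow
  · exact ⟨sSup s, fun x hx => le_csSup hs.bddAbove hx, fun y hy => csSup_le hsne (hst · · y hy)⟩

lemma sum_range_le_sum_range_of_nonneg_of_nonpos {M : Type*} [AddCommMonoid M] [PartialOrder M]
    [IsOrderedAddMonoid M] {d : ℕ → M} {m n k : ℕ} (hlo : ∀ i < m, 0 ≤ d i)
    (hhi : ∀ i, m ≤ i → i < n → d i ≤ 0) (hk : k ≤ n) :
    ∑ i ∈ range k, d i ≤ ∑ i ∈ range m, d i := by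
  rcases le_total k m with hkm | hmk
  · rw [← sum_range_add_sum_Ico d hkm]
    exact le_add_of_nonneg_right <|
      sum_nonneg fun i hi => hlo i (mem_Ico.mp hi).2
  · rw [← sum_range_add_sum_Ico d hmk]
    exact add_le_of_nonpos_right <|
      sum_nonpos fun i hi => hhi i (mem_Ico.mp hi).1 ((mem_Ico.mp hi).2.trans_le hk)

lemma sum_sum_range_sub_const {ι : Type*} [Fintype ι] (Δ : ι → ℕ → ℝ) (c : ℝ) (a : ι → ℕ) :
    ∑ t, ∑ i ∈ range (a t), (Δ t i - c) = ∑ t, ∑ i ∈ range (a t), Δ t i - (∑ t, a t) * c := by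
  simp only [sum_sub_distrib, sum_const, card_range, nsmul_eq_mul, Nat.cast_sum, sum_mul]

theorem stmt2_general (T n B : ℕ)
    (Δ : Fin T → ℕ → ℝ)
    (hmono : ∀ t : Fin T, ∀ i j : ℕ, i ≤ j → j ≤ n - 1 → Δ t j ≤ Δ t i)
    (b : Fin T → ℕ) (hb : ∀ t, b t ≤ n) (hbsum : ∑ t, b t = B)
    (hgreedy : ∀ t₁ t₂ : Fin T, 1 ≤ b t₁ → b t₂ < n →
      Δ t₂ (b t₂) ≤ Δ t₁ (b t₁ - 1))
    (b' : Fin T → ℕ) (hb' : ∀ t, b' t ≤ n) (hb'sum : ∑ t, b' t = B) :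
    ∑ t, ∑ i ∈ Finset.range (b' t), Δ t i ≤ ∑ t, ∑ i ∈ Finset.range (b t), Δ t i := by
  obtain ⟨c, hunspent, hspent⟩ :=
    ((Set.toFinite {t | b t < n}).image fun t => Δ t (b t)).exists_between_of_forall_le
      ((Set.toFinite {t | 1 ≤ b t}).image fun t => Δ t (b t - 1))
      (by rintro _ ⟨t₂, h₂, rfl⟩ _ ⟨t₁, h₁, rfl⟩; exact hgreedy t₁ t₂ h₁ h₂)
  have hround : ∀ t, ∑ i ∈ range (b' t), (Δ t i - c) ≤ ∑ i ∈ range (b t), (Δ t i - c) := by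
    intro t
    refine sum_range_le_sum_range_of_nonneg_of_nonpos (n := n) (fun i hi => ?_)
      (fun i hi hin => ?_) (hb' t)
    · have := hspent ⟨t, (show 1 ≤ b t by omega), rfl⟩
      have := hmono t i (b t - 1) (by omega) (by have := hb t; omega)
      linarith
    · have := hunspent ⟨t, (show b t < n by omega), rfl⟩
      have := hmono t (b t) i hi (by omega)
      linarith
  have hshifted := sum_le_sum fun t (_ : t ∈ univ) => hround t
  rw [sum_sum_range_sub_const, sum_sum_range_sub_const, hbsum, hb'sum] at hshifted
  linarith

/-- Lemma 4 of the paper (combinatorial content): if the per-round marginal gains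
`Δ t i` (for `i ≤ n - 1`) are nonincreasing in `i` for each round `t`, and the
allocation `b` satisfies the local greedy-optimality condition, then `b` maximizes
the total value `∑ t, ∑ i < b t, Δ t i` among all allocations of total budget `B`
with at most `n` units per round. -/
theorem stmt2 (T n B : ℕ) (hT : 1 ≤ T) (hn : 1 ≤ n) (hB : B ≤ n * T)
    (Δ : Fin T → ℕ → ℝ)
    (hmono : ∀ t : Fin T, ∀ i j : ℕ, i ≤ j → j ≤ n - 1 → Δ t j ≤ Δ t i)
    (b : Fin T → ℕ) (hb : ∀ t, b t ≤ n) (hbsum : ∑ t, b t = B)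
    (hgreedy : ∀ t₁ t₂ : Fin T, 1 ≤ b t₁ → b t₂ < n →
      Δ t₂ (b t₂) ≤ Δ t₁ (b t₁ - 1))
    (b' : Fin T → ℕ) (hb' : ∀ t, b' t ≤ n) (hb'sum : ∑ t, b' t = B) :
    ∑ t, ∑ i ∈ Finset.range (b' t), Δ t i ≤ ∑ t, ∑ i ∈ Finset.range (b t), Δ t i :=
  stmt2_general T n B Δ hmono b hb hbsum hgreedy b' hb' hb'sum
end

section
/- Let b ≥ 1 be a natural number, let O ≥ 0 and c ≥ 0 be real numbers, and let g : ℕ → ℝ satisfy g(0) = 0 and g(i) ≥ O/b + (1 − 1/b)·g(i−1) − c for every i ∈ {1,...,b}. Then g(b) ≥ (1 − (1 − 1/b)^b)·O − b·c, and consequently g(b) ≥ (1 − 1/e)·O − b·c. -/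
theorem le_of_affine_recursion {R : Type*} [CommRing R] [LinearOrder R] [IsStrictOrderedRing R]
    {x O c : R} (hx0 : 0 ≤ x) (hx1 : x ≤ 1) (hc : 0 ≤ c) {g : ℕ → R} (hg0 : g 0 = 0) {n : ℕ}
    (hrec : ∀ i < n, (1 - x) * O + x * g i - c ≤ g (i + 1)) :
    (1 - x ^ n) * O - n * c ≤ g n := by
  induction n with
  | zero => simp [hg0]
  | succ n ih =>
    have hprev := ih fun i hi => hrec i (Nat.lt_succ_of_lt hi)
    have hscaled := mul_le_mul_of_nonneg_left hprev hx0
    have hdamp : x * (n * c) ≤ n * c :=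
      mul_le_of_le_one_left (mul_nonneg n.cast_nonneg hc) hx1
    calc (1 - x ^ (n + 1)) * O - ↑(n + 1) * c
        ≤ (1 - x) * O + x * ((1 - x ^ n) * O - n * c) - c := by push_cast; linear_combination hdamp
      _ ≤ (1 - x) * O + x * g n - c := by linarith
      _ ≤ g (n + 1) := hrec n n.lt_succ_self

/-- The recursion-unrolling argument at the core of Lemmas 3 and 5 of the paper:
if `g 0 = 0` and `g i ≥ O / b + (1 - 1/b) * g (i-1) - c` for all `1 ≤ i ≤ b`, then
`g b ≥ (1 - (1 - 1/b)^b) * O - b * c ≥ (1 - 1/e) * O - b * c`. -/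
theorem stmt3 (b : ℕ) (hb : 1 ≤ b) (O c : ℝ) (hO : 0 ≤ O) (hc : 0 ≤ c)
    (g : ℕ → ℝ) (hg0 : g 0 = 0)
    (hrec : ∀ i : ℕ, 1 ≤ i → i ≤ b →
      O / (b : ℝ) + (1 - 1 / (b : ℝ)) * g (i - 1) - c ≤ g i) :
    (1 - (1 - 1 / (b : ℝ)) ^ b) * O - (b : ℝ) * c ≤ g b ∧
    (1 - 1 / Real.exp 1) * O - (b : ℝ) * c ≤ g b := by
  have hb' : (1 : ℝ) ≤ b := by exact_mod_cast hb
  have hstep : 1 / (b : ℝ) ≤ 1 := div_le_one_of_le₀ hb' b.cast_nonneg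
  have hmain : (1 - (1 - 1 / (b : ℝ)) ^ b) * O - b * c ≤ g b := by
    refine le_of_affine_recursion (sub_nonneg.2 hstep) (sub_le_self _ (by positivity)) hc hg0
      fun i hi => ?_
    have h := hrec (i + 1) (by omega) (by omega)
    rw [Nat.add_sub_cancel] at h
    linarith [show (1 - (1 - 1 / (b : ℝ))) * O = O / b by ring]
  have hexp : (1 - 1 / (b : ℝ)) ^ b ≤ 1 / Real.exp 1 := by
    simpa [Real.exp_neg] using Real.one_sub_div_pow_le_exp_neg (n := b) (t := 1) hb'
  have hO_coeff : (1 - 1 / Real.exp 1) * O ≤ (1 - (1 - 1 / (b : ℝ)) ^ b) * O :=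
    mul_le_mul_of_nonneg_right (by linarith) hO
  exact ⟨hmain, by linarith⟩
end

section
/- Let T, n, B be natural numbers with B ≤ n·T, let δ ≥ 0 and ε ≥ 0 be reals, and let Δ, Δ̃ : {1,...,T} × {0,...,n−1} → ℝ satisfy: (i) Δ(t,i) ≤ Δ(t,j) + ε whenever j ≤ i ≤ n−1 (near-nonincreasing rows), and (ii) |Δ̃(t,i) − Δ(t,i)| ≤ δ for all t and all i ≤ n−1. Define Δ̄(t,i) := min_{j ≤ i} Δ̃(t,j). Then: (a) Δ̄(t,i) ≤ Δ(t,i) + δ and Δ(t,i) ≤ Δ̄(t,i) + δ + ε for all t and i ≤ n−1; and (b) if b is an allocation maximizing ∑_{t=1}^T ∑_{i=0}^{b_t−1} Δ̄(t,i) among all allocations, then every allocation b' satisfies ∑_{t=1}^T ∑_{i=0}^{b'_t−1} Δ(t,i) ≤ ∑_{t=1}^T ∑_{i=0}^{b_t−1} Δ(t,i) + B·(2δ + ε). -/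
/-!
Each estimate `Δbar t i` is a minimum of `δ`-accurate estimates of gains `Δ t j`, `j ≤ i`, all
of which are at least `Δ t i - ε`; hence `Δbar` is within `δ` above and `δ + ε` below of `Δ`.
Summing over the `B` units of an allocation, true and estimated values differ by at most `Bδ`
one way and `B(δ + ε)` the other, and the optimality of `b` for the estimates closes the chain
`Δ(b') ≤ Δbar(b') + B(δ + ε) ≤ Δbar(b) + B(δ + ε) ≤ Δ(b) + B(2δ + ε)`.
-/

open Finset

theorem inf'_range_succ_le_add {f g : ℕ → ℝ} {δ : ℝ} {i : ℕ} (h : (range (i + 1)).Nonempty)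
    (hacc : |g i - f i| ≤ δ) : (range (i + 1)).inf' h g ≤ f i + δ :=
  calc (range (i + 1)).inf' h g ≤ g i := inf'_le _ (self_mem_range_succ i)
    _ ≤ f i + δ := by linarith [(abs_le.mp hacc).2]

theorem le_inf'_range_succ_add {f g : ℕ → ℝ} {δ ε : ℝ} {i : ℕ} (h : (range (i + 1)).Nonempty)
    (hmono : ∀ j ≤ i, f i ≤ f j + ε) (hacc : ∀ j ≤ i, |g j - f j| ≤ δ) :
    f i ≤ (range (i + 1)).inf' h g + δ + ε := by
  suffices f i - δ - ε ≤ (range (i + 1)).inf' h g by linarith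
  refine le_inf' h g fun j hj => ?_
  have hji : j ≤ i := Nat.lt_succ_iff.mp (mem_range.mp hj)
  linarith [hmono j hji, (abs_le.mp (hacc j hji)).1]

theorem sum_sum_range_le_add_mul {ι : Type*} (s : Finset ι) (c : ι → ℕ) (F G : ι → ℕ → ℝ)
    (κ : ℝ) (h : ∀ t ∈ s, ∀ i < c t, F t i ≤ G t i + κ) :
    ∑ t ∈ s, ∑ i ∈ range (c t), F t i ≤
      ∑ t ∈ s, ∑ i ∈ range (c t), G t i + ((∑ t ∈ s, c t : ℕ) : ℝ) * κ :=
  calc ∑ t ∈ s, ∑ i ∈ range (c t), F t i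
      ≤ ∑ t ∈ s, ∑ i ∈ range (c t), (G t i + κ) :=
        sum_le_sum fun t ht => sum_le_sum fun i hi => h t ht i (mem_range.mp hi)
    _ = ∑ t ∈ s, ∑ i ∈ range (c t), G t i + ((∑ t ∈ s, c t : ℕ) : ℝ) * κ := by
        simp only [sum_add_distrib, sum_const, card_range, nsmul_eq_mul, Nat.cast_sum, sum_mul]

theorem stmt7_general (T n B : ℕ)
    (δ ε : ℝ)
    (Δ Δt : Fin T → ℕ → ℝ)
    (hmono : ∀ t : Fin T, ∀ i j : ℕ, j ≤ i → i ≤ n - 1 → Δ t i ≤ Δ t j + ε)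
    (hacc : ∀ t : Fin T, ∀ i : ℕ, i ≤ n - 1 → |Δt t i - Δ t i| ≤ δ)
    (Δbar : Fin T → ℕ → ℝ)
    (hΔbar : ∀ t i, Δbar t i =
      (Finset.range (i + 1)).inf' (Finset.nonempty_range_iff.mpr (Nat.succ_ne_zero i)) (Δt t)) :
    (∀ t : Fin T, ∀ i : ℕ, i ≤ n - 1 →
        Δbar t i ≤ Δ t i + δ ∧ Δ t i ≤ Δbar t i + δ + ε) ∧
    (∀ b : Fin T → ℕ, (∀ t, b t ≤ n) → (∑ t, b t = B) →
      (∀ b'' : Fin T → ℕ, (∀ t, b'' t ≤ n) → (∑ t, b'' t = B) →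
        ∑ t, ∑ i ∈ Finset.range (b'' t), Δbar t i ≤
          ∑ t, ∑ i ∈ Finset.range (b t), Δbar t i) →
      ∀ b' : Fin T → ℕ, (∀ t, b' t ≤ n) → (∑ t, b' t = B) →
        ∑ t, ∑ i ∈ Finset.range (b' t), Δ t i ≤
          ∑ t, ∑ i ∈ Finset.range (b t), Δ t i + B * (2 * δ + ε)) := by
  have bounds : ∀ t : Fin T, ∀ i : ℕ, i ≤ n - 1 →
      Δbar t i ≤ Δ t i + δ ∧ Δ t i ≤ Δbar t i + δ + ε := fun t i hi => by
    rw [hΔbar]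
    exact ⟨inf'_range_succ_le_add _ (hacc t i hi),
      le_inf'_range_succ_add _ (fun j hj => hmono t i j hj hi)
        (fun j hj => hacc t j (hj.trans hi))⟩
  refine ⟨bounds, fun b hb hbsum hmax b' hb' hb'sum => ?_⟩
  have below_n : ∀ c : Fin T → ℕ, (∀ t, c t ≤ n) → ∀ t, ∀ i < c t, i ≤ n - 1 :=
    fun c hc t i hi => by have := hc t; omega
  have true_le_est := sum_sum_range_le_add_mul univ b' Δ Δbar (δ + ε)
    fun t _ i hi => by linarith [(bounds t i (below_n b' hb' t i hi)).2]
  have est_le_true := sum_sum_range_le_add_mul univ b Δbar Δ δ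
    fun t _ i hi => (bounds t i (below_n b hb t i hi)).1
  rw [hb'sum] at true_le_est
  rw [hbsum] at est_le_true
  linarith [hmax b' hb' hb'sum]

/-- The deterministic core of Lemma 6 of the paper: given true marginal gains `Δ`
with near-nonincreasing rows (up to an additive `ε`) and estimates `Δt` that are
`δ`-accurate, the running minima `Δbar t i = min_{j ≤ i} Δt t j` satisfy
`Δbar ≤ Δ + δ` and `Δ ≤ Δbar + δ + ε`; and any allocation `b` maximizing the total
estimated value `∑ t, ∑ i < b t, Δbar t i` loses at most `B (2δ + ε)` in true
value with respect to any other allocation `b'`. -/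
theorem stmt7 (T n B : ℕ) (hT : 1 ≤ T) (hn : 1 ≤ n) (hB : B ≤ n * T)
    (δ ε : ℝ) (hδ : 0 ≤ δ) (hε : 0 ≤ ε)
    (Δ Δt : Fin T → ℕ → ℝ)
    (hmono : ∀ t : Fin T, ∀ i j : ℕ, j ≤ i → i ≤ n - 1 → Δ t i ≤ Δ t j + ε)
    (hacc : ∀ t : Fin T, ∀ i : ℕ, i ≤ n - 1 → |Δt t i - Δ t i| ≤ δ)
    (Δbar : Fin T → ℕ → ℝ)
    (hΔbar : ∀ t i, Δbar t i =
      (Finset.range (i + 1)).inf' (Finset.nonempty_range_iff.mpr (Nat.succ_ne_zero i)) (Δt t)) :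
    (∀ t : Fin T, ∀ i : ℕ, i ≤ n - 1 →
        Δbar t i ≤ Δ t i + δ ∧ Δ t i ≤ Δbar t i + δ + ε) ∧
    (∀ b : Fin T → ℕ, (∀ t, b t ≤ n) → (∑ t, b t = B) →
      (∀ b'' : Fin T → ℕ, (∀ t, b'' t ≤ n) → (∑ t, b'' t = B) →
        ∑ t, ∑ i ∈ Finset.range (b'' t), Δbar t i ≤
          ∑ t, ∑ i ∈ Finset.range (b t), Δbar t i) →
      ∀ b' : Fin T → ℕ, (∀ t, b' t ≤ n) → (∑ t, b' t = B) →
        ∑ t, ∑ i ∈ Finset.range (b' t), Δ t i ≤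
          ∑ t, ∑ i ∈ Finset.range (b t), Δ t i + B * (2 * δ + ε)) :=
  stmt7_general T n B δ ε Δ Δt hmono hacc Δbar hΔbar
end

section
/- Let Δ : {1,...,T} × {0,...,n−1} → ℝ be such that each row is nonincreasing, i.e., Δ(t,j) ≤ Δ(t,i) whenever i ≤ j ≤ n−1, and let B ≤ n·T. Then there exists an allocation b = (b_1,...,b_T) (natural numbers with b_t ≤ n and ∑_t b_t = B) satisfying the local greedy-optimality condition: for all t₁, t₂, if b_{t₁} ≥ 1 and b_{t₂} < n then Δ(t₁, b_{t₁} − 1) ≥ Δ(t₂, b_{t₂}). -/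
/-! Induction on the budget, running the greedy procedure: add one unit to a round whose next
marginal gain `Δ s (b s)` is largest among the rounds not yet full. The condition for the
pairs `(s, t)` then holds by this maximality, and for the pairs `(t, s)` because the rows are
nonincreasing. -/

section GreedyAllocation

variable {ι α : Type*} [LinearOrder α]

def IsGreedyAllocation (n : ℕ) (Δ : ι → ℕ → α) (b : ι → ℕ) : Prop :=
  ∀ t₁ t₂, 1 ≤ b t₁ → b t₂ < n → Δ t₂ (b t₂) ≤ Δ t₁ (b t₁ - 1)

theorem isGreedyAllocation_zero (n : ℕ) (Δ : ι → ℕ → α) : IsGreedyAllocation n Δ 0 :=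
  fun _ _ h => absurd h (by simp)

theorem IsGreedyAllocation.update_succ [DecidableEq ι] {n : ℕ} {Δ : ι → ℕ → α} {b : ι → ℕ}
    (hΔ : ∀ t i, i + 1 < n → Δ t (i + 1) ≤ Δ t i) (hb : IsGreedyAllocation n Δ b) {s : ι}
    (hmax : ∀ t, b t < n → Δ t (b t) ≤ Δ s (b s)) :
    IsGreedyAllocation n Δ (Function.update b s (b s + 1)) := by
  intro t₁ t₂ h₁ h₂
  rcases eq_or_ne t₁ s with rfl | h₁s <;> rcases eq_or_ne t₂ t₁ with rfl | h₂₁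
  · simp only [Function.update_self, Nat.add_sub_cancel] at h₂ ⊢
    exact hΔ t₂ _ h₂
  · simp only [Function.update_self, Function.update_of_ne h₂₁, Nat.add_sub_cancel] at h₂ ⊢
    exact hmax t₂ h₂
  · simp only [Function.update_of_ne h₁s] at h₁ h₂ ⊢
    exact hb t₂ t₂ h₁ h₂
  · simp only [Function.update_of_ne h₁s] at h₁ ⊢
    rcases eq_or_ne t₂ s with rfl | h₂s
    · simp only [Function.update_self] at h₂ ⊢
      exact (hΔ t₂ _ h₂).trans (hb t₁ t₂ h₁ (by omega))
    · simp only [Function.update_of_ne h₂s] at h₂ ⊢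
      exact hb t₁ t₂ h₁ h₂

theorem exists_isGreedyAllocation [Fintype ι] {n : ℕ} {Δ : ι → ℕ → α}
    (hΔ : ∀ t i, i + 1 < n → Δ t (i + 1) ≤ Δ t i) :
    ∀ B ≤ n * Fintype.card ι,
      ∃ b : ι → ℕ, (∀ t, b t ≤ n) ∧ ∑ t, b t = B ∧ IsGreedyAllocation n Δ b := by
  classical
  intro B hB
  induction B with
  | zero => exact ⟨0, fun _ => Nat.zero_le n, by simp, isGreedyAllocation_zero n Δ⟩
  | succ B ih =>
    obtain ⟨b, hle, hsum, hgreedy⟩ := ih (by omega)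
    have hlt : ∑ t, b t < ∑ _t : ι, n := by simp [hsum, mul_comm]; omega
    obtain ⟨s, -, hs⟩ := Finset.exists_lt_of_sum_lt hlt
    obtain ⟨s, hs, hmax⟩ :=
      Finset.exists_max_image {t | b t < n} (fun t => Δ t (b t)) ⟨s, by simpa using hs⟩
    simp only [Finset.mem_filter, Finset.mem_univ, true_and] at hs hmax
    refine ⟨Function.update b s (b s + 1), fun t => ?_, ?_, hgreedy.update_succ hΔ hmax⟩
    · rcases eq_or_ne t s with rfl | hts
      · simpa using hs
      · simpa [Function.update_of_ne hts] using hle t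
    · rw [Finset.sum_update_of_mem (Finset.mem_univ s), ← hsum,
        ← Finset.add_sum_erase _ b (Finset.mem_univ s), Finset.sdiff_singleton_eq_erase]
      ring

end GreedyAllocation

theorem stmt11_general (T n B : ℕ) (hB : B ≤ n * T)
    (Δ : Fin T → ℕ → ℝ)
    (hmono : ∀ t : Fin T, ∀ i j : ℕ, i ≤ j → j ≤ n - 1 → Δ t j ≤ Δ t i) :
    ∃ b : Fin T → ℕ, (∀ t, b t ≤ n) ∧ (∑ t, b t = B) ∧
      ∀ t₁ t₂ : Fin T, 1 ≤ b t₁ → b t₂ < n →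
        Δ t₂ (b t₂) ≤ Δ t₁ (b t₁ - 1) :=
  exists_isGreedyAllocation (fun t i hi => hmono t i (i + 1) i.le_succ (by omega)) B
    (by simpa using hB)

/-- Existence of a greedily optimal budget allocation (as produced by the paper's
procedure BudgetGr): if the marginal gains `Δ t i` (for `i ≤ n - 1`) are
nonincreasing in `i` for each round `t`, and `B ≤ n·T`, then there is an
allocation `b` with `b t ≤ n` for all `t` and `∑ t, b t = B` satisfying the local
greedy-optimality condition: whenever `b t₁ ≥ 1` and `b t₂ < n`,
`Δ t₁ (b t₁ - 1) ≥ Δ t₂ (b t₂)`. -/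
theorem stmt11 (T n B : ℕ) (hT : 1 ≤ T) (hn : 1 ≤ n) (hB : B ≤ n * T)
    (Δ : Fin T → ℕ → ℝ)
    (hmono : ∀ t : Fin T, ∀ i j : ℕ, i ≤ j → j ≤ n - 1 → Δ t j ≤ Δ t i) :
    ∃ b : Fin T → ℕ, (∀ t, b t ≤ n) ∧ (∑ t, b t = B) ∧
      ∀ t₁ t₂ : Fin T, 1 ≤ b t₁ → b t₂ < n →
        Δ t₂ (b t₂) ≤ Δ t₁ (b t₁ - 1) :=
  stmt11_general T n B hB Δ hmono
end
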